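/- Let k be a commutative ring, ε ∈ {0, 1/2}, d = n - 2ε, and assume d > r + 1. If λ is a partition of d with strictly fewer than d - r parts, then y_λ = Σ_{w ∈ W_λ} sgn(w) w lies in the kernel of Φ_{n,r+ε}; that is: for ε = 0, y_λ ∈ k[W_n] annihilates V^{⊗r} under the diagonal action of W_n, and for ε = 1/2, y_λ ∈ k[W_{n-1}] annihilates V^{⊗r} under the restricted action of W_{n-1} = {w ∈ W_n : w(n) = n}. Consequently the two-sided ideal of k[W_d] generated by all such y_λ is contained in the kernel of Φ_{n,r+ε}. -/

import Mathlib

noncomputable section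

open Equiv

/-- The linear action of a group `G` on the free `k`-module `X → k` of functions,
induced from a `G`-action on `X` by `(g • f) x = f (g⁻¹ • x)`. -/
def actEnd (k : Type) [CommRing k] (G : Type) [Group G] (X : Type) [MulAction G X] :
    G →* Module.End k (X → k) where
  toFun g := LinearMap.funLeft k k fun x => g⁻¹ • x
  map_one' := by
    ext f x
    simp
  map_mul' g₁ g₂ := by
    ext f x
    simp [mul_smul]

/-- The diagonal (value-permutation) action of the symmetric group `W_n` on
`V^{⊗r}` (`V = k^n`), modelled as the free `k`-module on multi-indices `Fin r → Fin n`;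
on basis vectors, `w ⬝ (v_{i_1} ⊗ ⋯ ⊗ v_{i_r}) = v_{w i_1} ⊗ ⋯ ⊗ v_{w i_r}`. -/
def permEnd (k : Type) [CommRing k] (n r : ℕ) :
    Equiv.Perm (Fin n) →* Module.End k ((Fin r → Fin n) → k) :=
  actEnd k (Equiv.Perm (Fin n)) (Fin r → Fin n)

/-- `Φ_{n,r} : k[W_n] → End_k(V^{⊗r})`. -/
def PhiAlg (k : Type) [CommRing k] (n r : ℕ) :
    MonoidAlgebra k (Equiv.Perm (Fin n)) →ₐ[k] Module.End k ((Fin r → Fin n) → k) :=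
  MonoidAlgebra.lift k (Module.End k ((Fin r → Fin n) → k)) (Equiv.Perm (Fin n)) (permEnd k n r)

/-- The restriction of `Φ_{n,r}` to the group algebra of a subgroup `G ≤ W_n`. -/
def PhiSub (k : Type) [CommRing k] (n r : ℕ) (G : Subgroup (Equiv.Perm (Fin n))) :
    MonoidAlgebra k ↥G →ₐ[k] Module.End k ((Fin r → Fin n) → k) :=
  MonoidAlgebra.lift k (Module.End k ((Fin r → Fin n) → k)) ↥G ((permEnd k n r).comp G.subtype)

/-- `W_{n-1} = {w ∈ W_n : w(n) = n}`, the stabilizer of the last basis vector. -/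
def stabLast (n : ℕ) (hn : 0 < n) : Subgroup (Equiv.Perm (Fin n)) :=
  MulAction.stabilizer (Equiv.Perm (Fin n)) (⟨n - 1, Nat.sub_lt hn Nat.one_pos⟩ : Fin n)

/-- `V(Λ)`: the span of the basis tensors whose multi-index has value-type `Λ`
(the value-type of a multi-index `i` is the set-partition `Setoid.ker i` by fibers). -/
def Vpart (k : Type) [CommRing k] (n r : ℕ) (Λ : Setoid (Fin r)) :
    Submodule k ((Fin r → Fin n) → k) :=
  Submodule.span k {f | ∃ i : Fin r → Fin n, Setoid.ker i = Λ ∧ f = Pi.single i 1}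

/-- `V'(Λ')`: the span of the basis tensors `v_{i_1} ⊗ ⋯ ⊗ v_{i_r} ⊗ v_n`
whose multi-index `(i_1, …, i_r, n)` has value-type `Λ'`. -/
def Vpart' (k : Type) [CommRing k] (n r : ℕ) (hn : 0 < n) (Λ' : Setoid (Fin (r + 1))) :
    Submodule k ((Fin (r + 1) → Fin n) → k) :=
  Submodule.span k {f | ∃ i : Fin (r + 1) → Fin n, Setoid.ker i = Λ' ∧
    i (Fin.last r) = (⟨n - 1, Nat.sub_lt hn Nat.one_pos⟩ : Fin n) ∧ f = Pi.single i 1}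

/-- The submodule `V^{⊗r} ⊗ v_n ⊆ V^{⊗(r+1)}`. -/
def lastSub (k : Type) [CommRing k] (n r : ℕ) (hn : 0 < n) :
    Submodule k ((Fin (r + 1) → Fin n) → k) :=
  Submodule.span k {f | ∃ i : Fin (r + 1) → Fin n,
    i (Fin.last r) = (⟨n - 1, Nat.sub_lt hn Nat.one_pos⟩ : Fin n) ∧ f = Pi.single i 1}

/-- The multi-index of the tensor `v_{n-l+1} ⊗ ⋯ ⊗ v_n`. -/
def baseIdx (n l : ℕ) (h : l ≤ n) : Fin l → Fin n :=
  fun α => ⟨n - l + α.1, by have := α.isLt; omega⟩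

/-- `H_n(l)`: the `k[W_n]`-submodule of `V^{⊗l}` generated by `v_{n-l+1} ⊗ ⋯ ⊗ v_n`. -/
def Hmod (k : Type) [CommRing k] (n l : ℕ) (h : l ≤ n) :
    Submodule k ((Fin l → Fin n) → k) :=
  Submodule.span k
    (Set.range fun w : Equiv.Perm (Fin n) => permEnd k n l w (Pi.single (baseIdx n l h) 1))

/-- The multi-index of the tensor `v_{n-m} ⊗ ⋯ ⊗ v_{n-1}` (inside `U = ⟨v_1, …, v_{n-1}⟩`). -/
def baseIdx' (n m : ℕ) (h : m < n) : Fin m → Fin n :=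
  fun α => ⟨n - 1 - m + α.1, by have := α.isLt; omega⟩

/-- `H_{n-1}(m)`: the `k[W_{n-1}]`-submodule of `U^{⊗m}` generated by
`v_{n-m} ⊗ ⋯ ⊗ v_{n-1}`, where `U = ⟨v_1, …, v_{n-1}⟩`. -/
def Hprime (k : Type) [CommRing k] (n m : ℕ) (h : m < n) :
    Submodule k ((Fin m → Fin n) → k) :=
  Submodule.span k
    (Set.range fun w : ↥(stabLast n (by omega)) =>
      permEnd k n m ↑w (Pi.single (baseIdx' n m h) 1))

/-- The Young subgroup `W_{(n-l,1^l)}` of permutations fixing each of the last `l` points. -/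
def fixTop (n l : ℕ) : Subgroup (Equiv.Perm (Fin n)) where
  carrier := {w | ∀ j : Fin n, n - l ≤ (j : ℕ) → w j = j}
  one_mem' := by intro j _; rfl
  mul_mem' := by
    intro a b ha hb j hj
    simp only [Set.mem_setOf_eq] at ha hb
    rw [Equiv.Perm.mul_apply, hb j hj, ha j hj]
  inv_mem' := by
    intro a ha j hj
    simp only [Set.mem_setOf_eq] at ha
    conv_lhs => rw [← ha j hj]
    exact (show a⁻¹ (a j) = j from Equiv.symm_apply_apply a j)

/-- The index of the consecutive block (with block sizes `lam`) containing position `x`. -/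
def blockIdx (lam : List ℕ) (x : ℕ) : ℕ :=
  ((List.range lam.length).filter fun t => (lam.take (t + 1)).sum ≤ x).length

/-- The Young subgroup `W_λ ≤ W_d`: permutations preserving each consecutive block
of sizes `λ_1, λ_2, …`. -/
def youngSubgroup (d : ℕ) (lam : List ℕ) : Subgroup (Equiv.Perm (Fin d)) where
  carrier := {w | ∀ j : Fin d, blockIdx lam ((w j : Fin d) : ℕ) = blockIdx lam (j : ℕ)}
  one_mem' := by intro j; rfl
  mul_mem' := by
    intro a b ha hb j
    simp only [Set.mem_setOf_eq] at ha hb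
    rw [Equiv.Perm.mul_apply, ha (b j), hb j]
  inv_mem' := by
    intro a ha j
    simp only [Set.mem_setOf_eq] at ha
    conv_rhs => rw [← show a (a⁻¹ j) = j from Equiv.apply_symm_apply a j]
    rw [ha (a⁻¹ j)]

/-- `x_λ = Σ_{w ∈ W_λ} w ∈ k[W_d]`. -/
def xElt (k : Type) [CommRing k] (d : ℕ) (lam : List ℕ) :
    MonoidAlgebra k (Equiv.Perm (Fin d)) :=
  letI := Classical.decPred (· ∈ youngSubgroup d lam)
  ∑ w ∈ Finset.univ.filter (· ∈ youngSubgroup d lam), MonoidAlgebra.single w (1 : k)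

/-- `y_λ = Σ_{w ∈ W_λ} sgn(w) w ∈ k[W_d]`. -/
def yElt (k : Type) [CommRing k] (d : ℕ) (lam : List ℕ) :
    MonoidAlgebra k (Equiv.Perm (Fin d)) :=
  letI := Classical.decPred (· ∈ youngSubgroup d lam)
  ∑ w ∈ Finset.univ.filter (· ∈ youngSubgroup d lam),
    MonoidAlgebra.single w ((Equiv.Perm.sign w : ℤ) : k)

/-- `y_λ = Σ_{w ∈ W_λ ∩ G} sgn(w) w`, as an element of the group algebra of a
subgroup `G ≤ W_d` (for `G = W_{n-1}` and `λ ⊢ n-1` this is the usual `y_λ ∈ k[W_{n-1}]`). -/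
def yEltSub (k : Type) [CommRing k] {d : ℕ} (G : Subgroup (Equiv.Perm (Fin d)))
    (lam : List ℕ) : MonoidAlgebra k ↥G :=
  letI : Fintype ↥G := Fintype.ofFinite ↥G
  letI := Classical.decPred fun w : ↥G => (w : Equiv.Perm (Fin d)) ∈ youngSubgroup d lam
  ∑ w ∈ Finset.univ.filter (fun w : ↥G => (w : Equiv.Perm (Fin d)) ∈ youngSubgroup d lam),
    MonoidAlgebra.single w ((Equiv.Perm.sign (w : Equiv.Perm (Fin d)) : ℤ) : k)

/-- The dominance order on partitions (as lists of parts): `lam ⊵ mu`. -/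
def Dominates (lam mu : List ℕ) : Prop :=
  ∀ t : ℕ, (mu.take t).sum ≤ (lam.take t).sum

/-- The conjugate (transpose) partition: `μᵀ_i = #{j : μ_j ≥ i}`. -/
def conjList (mu : List ℕ) : List ℕ :=
  (List.range mu.headI).map fun i => (mu.filter fun p => i < p).length

/-- `lam` is a partition of `d`: positive parts, in weakly decreasing order, summing to `d`. -/
def IsPartitionList (d : ℕ) (lam : List ℕ) : Prop :=
  (∀ p ∈ lam, 0 < p) ∧ lam.sum = d ∧ lam.Pairwise (· ≥ ·)

/-- The hook partition `α(d,r) = (d-r, 1^r)`. -/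
def hookPartition (d r : ℕ) : List ℕ := (d - r) :: List.replicate r 1

/-- The representation of `k[W_d]` on the permutation module `M^λ`, the free `k`-module
on the left cosets `W_d / W_λ` with `W_d` acting by left translation. -/
def PhiQuot (k : Type) [CommRing k] (d : ℕ) (lam : List ℕ) :
    MonoidAlgebra k (Equiv.Perm (Fin d)) →ₐ[k]
      Module.End k ((Equiv.Perm (Fin d) ⧸ youngSubgroup d lam) → k) :=
  MonoidAlgebra.lift k _ _
    (actEnd k (Equiv.Perm (Fin d)) (Equiv.Perm (Fin d) ⧸ youngSubgroup d lam))

/-- The representation of `k[G]` (for `G ≤ W_d`) on the permutation module on the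
left cosets `G / (G ∩ W_λ)`. -/
def PhiQuotSub (k : Type) [CommRing k] {d : ℕ} (G : Subgroup (Equiv.Perm (Fin d)))
    (lam : List ℕ) :
    MonoidAlgebra k ↥G →ₐ[k]
      Module.End k ((↥G ⧸ Subgroup.comap G.subtype (youngSubgroup d lam)) → k) :=
  MonoidAlgebra.lift k _ _
    (actEnd k ↥G (↥G ⧸ Subgroup.comap G.subtype (youngSubgroup d lam)))

/-- The Stirling number of the second kind `S(r,l)`: the number of set-partitions
of an `r`-element set into exactly `l` nonempty blocks. -/
def stirling (r l : ℕ) : ℕ :=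
  Nat.card {Λ : Setoid (Fin r) // Nat.card (Quotient Λ) = l}

/-! A basis tensor `v_{i_1} ⊗ ⋯ ⊗ v_{i_r}` uses at most `r` indices (`r + 1` counting `n` when
`ε = 1/2`), so at least `d - r` indices `≤ d` are free. Since `λ` has fewer than `d - r` blocks, two
free indices `a ≠ b` share a block, and the transposition `(a b) ∈ W_λ` fixes the tensor. Pairing `w`
with `(a b) w` then cancels the coordinate of `y_λ ⬝ f` at that tensor term by term, with no
division by `2`. The kernel of an algebra map is a two-sided ideal. -/

lemma actEnd_apply (k : Type) [CommRing k] {G X : Type} [Group G] [MulAction G X] (g : G)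
    (f : X → k) (x : X) : actEnd k G X g f x = f (g⁻¹ • x) := rfl

lemma sum_smul_actEnd_apply_eq_zero {k : Type} [CommRing k] {G X : Type} [Group G]
    [MulAction G X] (s : Finset G) (c : G → k) {τ : G} (hτ : τ * τ = 1) (hτ1 : τ ≠ 1)
    (hs : ∀ w ∈ s, τ * w ∈ s) (hc : ∀ w ∈ s, c (τ * w) = -c w) (f : X → k) {x : X}
    (hx : τ • x = x) :
    (∑ w ∈ s, c w • actEnd k G X w) f x = 0 := by
  simp only [LinearMap.sum_apply, Finset.sum_apply, LinearMap.smul_apply, Pi.smul_apply,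
    actEnd_apply, smul_eq_mul]
  refine Finset.sum_involution (fun w _ => τ * w) (fun w hw => ?_) (fun w _ _ => ?_) hs
    (fun w _ => by rw [← mul_assoc, hτ, one_mul])
  · have hτx : τ⁻¹ • x = x := inv_smul_eq_iff.2 hx.symm
    rw [hc w hw, mul_inv_rev, mul_smul, hτx]
    ring
  · simpa using hτ1

lemma intCast_sign_swap_mul (k : Type*) [CommRing k] {α : Type*} [DecidableEq α] [Fintype α]
    {a b : α} (hab : a ≠ b) (w : Perm α) :
    ((Perm.sign (swap a b * w) : ℤ) : k) = -((Perm.sign w : ℤ) : k) := by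
  simp [Perm.sign_swap hab]

lemma phiAlg_yElt_eq_zero_of_forall_swap (k : Type) [CommRing k] (n r : ℕ) (lam : List ℕ)
    (hswap : ∀ x : Fin r → Fin n, ∃ a b, a ≠ b ∧ swap a b ∈ youngSubgroup n lam ∧
      ∀ i, swap a b (x i) = x i) :
    PhiAlg k n r (yElt k n lam) = 0 := by
  refine LinearMap.ext fun f => funext fun x => ?_
  obtain ⟨a, b, hab, hY, hx⟩ := hswap x
  simp only [yElt, map_sum, PhiAlg, MonoidAlgebra.lift_single]
  refine sum_smul_actEnd_apply_eq_zero _ _ (swap_mul_self a b) (by simpa using hab)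
    (fun w hw => ?_) (fun w _ => intCast_sign_swap_mul k hab w) f
    (funext hx : swap a b • x = x)
  simp only [Finset.mem_filter, Finset.mem_univ, true_and] at hw ⊢
  exact mul_mem hY hw

lemma phiSub_yEltSub_eq_zero_of_forall_swap (k : Type) [CommRing k] (n r : ℕ)
    (G : Subgroup (Perm (Fin n))) (lam : List ℕ)
    (hswap : ∀ x : Fin r → Fin n, ∃ a b, a ≠ b ∧ swap a b ∈ G ∧
      swap a b ∈ youngSubgroup n lam ∧ ∀ i, swap a b (x i) = x i) :
    PhiSub k n r G (yEltSub k G lam) = 0 := by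
  refine LinearMap.ext fun f => funext fun x => ?_
  obtain ⟨a, b, hab, hG, hY, hx⟩ := hswap x
  simp only [yEltSub, map_sum, PhiSub, MonoidAlgebra.lift_single]
  refine sum_smul_actEnd_apply_eq_zero (G := G) _ _ (τ := ⟨swap a b, hG⟩)
    (Subtype.ext (swap_mul_self a b)) (fun h => by simpa [hab] using congrArg Subtype.val h)
    (fun w hw => ?_) (fun w _ => intCast_sign_swap_mul k hab w) f
    (funext hx : (⟨swap a b, hG⟩ : G) • x = x)
  simp only [Finset.mem_filter, Finset.mem_univ, true_and, Subgroup.coe_mul] at hw ⊢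
  exact mul_mem hY hw

lemma blockIdx_lt_length {lam : List ℕ} {x : ℕ} (hx : x < lam.sum) :
    blockIdx lam x < lam.length := by
  have hpos : 0 < lam.length := List.length_pos_iff.2 (by rintro rfl; simp at hx)
  have hlast : lam.length - 1 ∈ List.range lam.length := List.mem_range.2 (by omega)
  simpa [blockIdx, Nat.sub_add_cancel hpos, hx] using
    List.length_filter_lt_length_iff_exists.2 ⟨_, hlast, by simp [Nat.sub_add_cancel hpos, hx]⟩

lemma swap_mem_youngSubgroup {d : ℕ} {lam : List ℕ} {a b : Fin d}
    (h : blockIdx lam a = blockIdx lam b) : swap a b ∈ youngSubgroup d lam := by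
  intro j
  rcases eq_or_ne j a with rfl | hja
  · rw [swap_apply_left]; exact h.symm
  rcases eq_or_ne j b with rfl | hjb
  · rw [swap_apply_right]; exact h
  · rw [swap_apply_of_ne_of_ne hja hjb]

lemma exists_swap_mem_youngSubgroup {d : ℕ} (lam : List ℕ) (S : Finset (Fin d))
    (hcard : lam.length < S.card) (hS : ∀ j ∈ S, (j : ℕ) < lam.sum) :
    ∃ a b, a ≠ b ∧ swap a b ∈ youngSubgroup d lam ∧ ∀ j ∉ S, swap a b j = j := by
  obtain ⟨a, ha, b, hb, hab, hblock⟩ :=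
    Finset.exists_ne_map_eq_of_card_lt_of_maps_to (t := Finset.range lam.length)
      (by simpa using hcard) (f := fun j : Fin d => blockIdx lam j)
      (fun j hj => Finset.mem_range.2 (blockIdx_lt_length (hS j hj)))
  refine ⟨a, b, hab, swap_mem_youngSubgroup hblock, fun j hj => ?_⟩
  exact swap_apply_of_ne_of_ne (by rintro rfl; exact hj ha) (by rintro rfl; exact hj hb)

lemma phiAlg_yElt_eq_zero (k : Type) [CommRing k] (n r : ℕ) (lam : List ℕ)
    (hsum : lam.sum = n) (hlen : lam.length < n - r) :
    PhiAlg k n r (yElt k n lam) = 0 := by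
  classical
  refine phiAlg_yElt_eq_zero_of_forall_swap k n r lam fun x => ?_
  have hcard : lam.length < (Finset.univ.image x)ᶜ.card := by
    have := Finset.card_image_le (s := (Finset.univ : Finset (Fin r))) (f := x)
    rw [Finset.card_univ, Fintype.card_fin] at this
    rw [Finset.card_compl, Fintype.card_fin]
    omega
  obtain ⟨a, b, hab, hY, hfix⟩ :=
    exists_swap_mem_youngSubgroup lam _ hcard fun j _ => hsum ▸ j.isLt
  exact ⟨a, b, hab, hY, fun i => hfix _ (by simp)⟩

lemma phiSub_stabLast_yEltSub_eq_zero (k : Type) [CommRing k] (n r : ℕ) (hn : 0 < n)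
    (lam : List ℕ) (hsum : lam.sum = n - 1) (hlen : lam.length < n - 1 - r) :
    PhiSub k n r (stabLast n hn) (yEltSub k (stabLast n hn) lam) = 0 := by
  classical
  refine phiSub_yEltSub_eq_zero_of_forall_swap k n r _ lam fun x => ?_
  set last : Fin n := ⟨n - 1, Nat.sub_lt hn Nat.one_pos⟩
  have hcard : lam.length < (insert last (Finset.univ.image x))ᶜ.card := by
    have := Finset.card_insert_le last (Finset.univ.image x)
    have := Finset.card_image_le (s := (Finset.univ : Finset (Fin r))) (f := x)
    rw [Finset.card_univ, Fintype.card_fin] at this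
    rw [Finset.card_compl, Fintype.card_fin]
    omega
  have hS : ∀ j ∈ (insert last (Finset.univ.image x))ᶜ, (j : ℕ) < lam.sum := by
    intro j hj
    have hj : (j : ℕ) ≠ n - 1 := fun h => by simp [show j = last from Fin.ext h] at hj
    have := j.isLt
    omega
  obtain ⟨a, b, hab, hY, hfix⟩ := exists_swap_mem_youngSubgroup lam _ hcard hS
  exact ⟨a, b, hab, MulAction.mem_stabilizer_iff.2 (hfix last (by simp)), hY,
    fun i => hfix _ (by simp)⟩

lemma TwoSidedIdeal.map_eq_zero_of_mem_span {R S F : Type*} [Ring R] [Ring S] [FunLike F R S]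
    [RingHomClass F R S] (f : F) {s : Set R} (hs : ∀ y ∈ s, f y = 0) {a : R}
    (ha : a ∈ TwoSidedIdeal.span s) : f a = 0 :=
  (TwoSidedIdeal.mem_ker f).1 <|
    TwoSidedIdeal.span_le.2 (fun y hy => (TwoSidedIdeal.mem_ker f).2 (hs y hy)) ha

/-- Let `ε ∈ {0, 1/2}`, `d = n - 2ε`, and `d > r + 1`. If `λ ⊢ d` has strictly fewer
than `d - r` parts, then `y_λ ∈ ker Φ_{n,r+ε}`; consequently the two-sided ideal
generated by all such `y_λ` is contained in `ker Φ_{n,r+ε}`. -/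
theorem stmt_14 (k : Type) [CommRing k] (n r : ℕ) :
    (∀ _h : r + 1 < n,
      (∀ lam : List ℕ, IsPartitionList n lam → lam.length < n - r →
        PhiAlg k n r (yElt k n lam) = 0) ∧
      (∀ a : MonoidAlgebra k (Equiv.Perm (Fin n)),
        a ∈ TwoSidedIdeal.span {y : MonoidAlgebra k (Equiv.Perm (Fin n)) |
          ∃ lam : List ℕ, IsPartitionList n lam ∧ lam.length < n - r ∧ y = yElt k n lam} →
        PhiAlg k n r a = 0)) ∧
    (∀ (hn : 0 < n), r + 1 < n - 1 →
      (∀ lam : List ℕ, IsPartitionList (n - 1) lam → lam.length < n - 1 - r →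
        PhiSub k n r (stabLast n hn) (yEltSub k (stabLast n hn) lam) = 0) ∧
      (∀ a : MonoidAlgebra k ↥(stabLast n hn),
        a ∈ TwoSidedIdeal.span {y : MonoidAlgebra k ↥(stabLast n hn) |
          ∃ lam : List ℕ, IsPartitionList (n - 1) lam ∧ lam.length < n - 1 - r ∧
            y = yEltSub k (stabLast n hn) lam} →
        PhiSub k n r (stabLast n hn) a = 0)) := by
  refine ⟨fun _ => ?_, fun hn _ => ?_⟩
  · have hy : ∀ lam : List ℕ, IsPartitionList n lam → lam.length < n - r →
        PhiAlg k n r (yElt k n lam) = 0 :=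
      fun lam hp hlen => phiAlg_yElt_eq_zero k n r lam hp.2.1 hlen
    refine ⟨hy, fun a => TwoSidedIdeal.map_eq_zero_of_mem_span _ ?_⟩
    rintro _ ⟨lam, hp, hlen, rfl⟩
    exact hy lam hp hlen
  · have hy : ∀ lam : List ℕ, IsPartitionList (n - 1) lam → lam.length < n - 1 - r →
        PhiSub k n r (stabLast n hn) (yEltSub k (stabLast n hn) lam) = 0 :=
      fun lam hp hlen => phiSub_stabLast_yEltSub_eq_zero k n r hn lam hp.2.1 hlen
    refine ⟨hy, fun a => TwoSidedIdeal.map_eq_zero_of_mem_span _ ?_⟩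
    rintro _ ⟨lam, hp, hlen, rfl⟩
    exact hy lam hp hlen
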